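/- If Λ ⊂ ℝ is not a uniqueness set for B_σ, then there exists an entire function g of exponential type ≤ σ which vanishes on Λ and is unbounded on ℝ. -/

import Mathlib

open Complex Filter MeasureTheory
open scoped ENNReal NNReal Real

/-- Entire function of exponential type at most `σ`. -/
def ExpTypeLe (σ : ℝ) (f : ℂ → ℂ) : Prop :=
  Differentiable ℂ f ∧ ∀ c > σ, ∃ C > 0, ∀ z : ℂ,
    ‖f z‖ ≤ C * Real.exp (c * ‖z‖)

/-- Entire function of exponential type strictly less than `σ`. -/
def ExpTypeLt (σ : ℝ) (f : ℂ → ℂ) : Prop :=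
  Differentiable ℂ f ∧ ∃ c, 0 < c ∧ c < σ ∧ ∃ C > 0, ∀ z : ℂ,
    ‖f z‖ ≤ C * Real.exp (c * ‖z‖)

/-- The Bernstein class `B_σ`: exponential type `≤ σ` and bounded on `ℝ`. -/
def Bern (σ : ℝ) (f : ℂ → ℂ) : Prop :=
  ExpTypeLe σ f ∧ ∃ M : ℝ, ∀ x : ℝ, ‖f x‖ ≤ M

/-- `f` is bounded on a subset `Λ` of the reals. -/
def BddOnSet (f : ℂ → ℂ) (Λ : Set ℝ) : Prop :=
  ∃ M : ℝ, ∀ l ∈ Λ, ‖f l‖ ≤ M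

/-- `f` is unbounded on the real axis. -/
def UnbddOnReal (f : ℂ → ℂ) : Prop :=
  ∀ M : ℝ, ∃ x : ℝ, ‖f x‖ > M

/-- Uniformly discrete subset of `ℝ`. -/
def UnifDiscrete (Λ : Set ℝ) : Prop :=
  ∃ d > 0, ∀ x ∈ Λ, ∀ y ∈ Λ, x ≠ y → d ≤ |x - y|

/-- Lower uniform density of `Λ ⊆ ℝ`. -/
noncomputable def lowerUnifDensity (Λ : Set ℝ) : ℝ :=
  Filter.liminf
    (fun r : ℝ => ⨅ x : ℝ,
      (Nat.card (Λ ∩ Set.Ioo (x - r) (x + r) : Set ℝ) : ℝ) / (2 * r))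
    Filter.atTop

/-- `Λ` is a Cartwright set for the class `M`. -/
def CartwrightSet (M : (ℂ → ℂ) → Prop) (Λ : Set ℝ) : Prop :=
  ¬ ∃ f, M f ∧ BddOnSet f Λ ∧ UnbddOnReal f

/-- `Λ` is a sampling set for the class `M` with constant `K`:
for each `f ∈ M` the sampling inequality holds on an unbounded set of `r`. -/
def SSFor (M : (ℂ → ℂ) → Prop) (Λ : Set ℝ) (K : ℝ) : Prop :=
  ∀ f, M f → ∀ R : ℝ, ∃ r > R, ∀ x : ℝ, |x| ≤ r →
    ‖f x‖ ≤ K * sSup ((fun l : ℝ => ‖f l‖) '' (Λ ∩ Set.Icc (-r) r))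

/-- `Λ` is a sampling set for the class `M`. -/
def IsSSClass (M : (ℂ → ℂ) → Prop) (Λ : Set ℝ) : Prop :=
  ∃ K : ℝ, 0 ≤ K ∧ SSFor M Λ K

/-- The classical sampling inequality for `B_σ` with constant `K`. -/
def BernSamp (σ : ℝ) (Λ : Set ℝ) (K : ℝ) : Prop :=
  ∀ f, Bern σ f → ∀ x : ℝ,
    ‖f x‖ ≤ K * sSup ((fun l : ℝ => ‖f l‖) '' Λ)

/-- `Λ` is a (classical) sampling set for `B_σ`. -/
def IsSSB (σ : ℝ) (Λ : Set ℝ) : Prop :=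
  ∃ K : ℝ, 0 ≤ K ∧ BernSamp σ Λ K

/-- Sampling bound `K(Λ, B_σ)` (equal to `∞` if `Λ` is not a sampling set). -/
noncomputable def KB (σ : ℝ) (Λ : Set ℝ) : ℝ≥0∞ :=
  sInf (ENNReal.ofReal '' {K : ℝ | 0 ≤ K ∧ BernSamp σ Λ K})

/-- Sampling bound `K(Λ, M)` for a general class `M`. -/
noncomputable def KClass (M : (ℂ → ℂ) → Prop) (Λ : Set ℝ) : ℝ≥0∞ :=
  sInf (ENNReal.ofReal '' {K : ℝ | 0 ≤ K ∧ SSFor M Λ K})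

/-- Weak convergence of closed subsets of `ℝ`. -/
def WeakConv (Λn : ℕ → Set ℝ) (Λ : Set ℝ) : Prop :=
  ∀ a b : ℝ, a ≤ b → a ∉ Λ → b ∉ Λ →
    Tendsto (fun n => Metric.hausdorffDist (Λn n ∩ Set.Icc a b) (Λ ∩ Set.Icc a b))
      atTop (nhds 0)

/-- Entire functions with `|f(z)| ≤ C e^{c|z|^n}` for some `0 < c < σ`. -/
def ExpTypeLtN (σ : ℝ) (n : ℕ) (f : ℂ → ℂ) : Prop :=
  Differentiable ℂ f ∧ ∃ c, 0 < c ∧ c < σ ∧ ∃ C > 0, ∀ z : ℂ,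
    ‖f z‖ ≤ C * Real.exp (c * (‖z‖) ^ n)

/-- The signed `n`-th power `Γⁿ` of a set `Γ ⊆ ℝ`. -/
def signedPow (n : ℕ) (Γ : Set ℝ) : Set ℝ :=
  {t | ∃ γ ∈ Γ, (0 ≤ γ ∧ t = γ ^ n) ∨ (γ < 0 ∧ t = -|γ| ^ n)}

section Stmt9Proof

open Set Asymptotics
open scoped Topology

local notation "expR" => Real.exp


/-- PL bound on the right half plane for entire `f` with global exponential growth
and decay `C e^{-κ x}` on the positive real axis. -/
lemma PL_right {f : ℂ → ℂ} (hf : Differentiable ℂ f) {M C c' κ : ℝ}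
    (hC : 0 < C) (hM : 0 < M) (hc' : 0 < c') (hκ : 0 ≤ κ)
    (hg : ∀ z, ‖f z‖ ≤ M * expR (c' * ‖z‖))
    (hr : ∀ x : ℝ, 0 ≤ x → ‖f x‖ ≤ C * expR (-κ * x)) :
    ∀ z : ℂ, 0 ≤ z.re →
      ‖f z‖ ≤ max C M * expR (-κ * z.re + c' * |z.im|) := by
  intro z hzre
  rcases le_or_gt 0 z.im with hzim | hzim
  · -- first quadrant
    set F : ℂ → ℂ := fun w => f w * Complex.exp ((κ + c' * I) * w) with hF
    have hFabs : ∀ w : ℂ, ‖F w‖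
        = ‖f w‖ * expR (κ * w.re - c' * w.im) := by
      intro w
      have hre : ((↑κ + ↑c' * I) * w).re = κ * w.re - c' * w.im := by
        simp [Complex.add_re, Complex.mul_re]
      simp only [hF, norm_mul, Complex.norm_exp, hre]
    have key : ‖F z‖ ≤ max C M := by
      have := PhragmenLindelof.quadrant_I (f := F) (C := max C M)
        ((hf.mul ((differentiable_const _).mul differentiable_id).cexp).diffContOnCl)
        ?_ ?_ ?_ hzre hzim
      · simpa using this
      · refine ⟨1, one_lt_two, κ + 2 * c', ?_⟩
        refine IsBigO.of_bound M ?_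
        filter_upwards with w
        rw [hFabs]
        have h1 : ‖f w‖ ≤ M * expR (c' * ‖w‖) := hg w
        have h2 : κ * w.re - c' * w.im ≤ κ * ‖w‖ + c' * ‖w‖ := by
          have := Complex.abs_re_le_norm w
          have := Complex.abs_im_le_norm w
          have h3 : κ * w.re ≤ κ * ‖w‖ := by
            nlinarith [abs_le.mp (le_refl |w.re|), neg_abs_le w.re, le_abs_self w.re]
          nlinarith [neg_abs_le w.im, le_abs_self w.im]
        have : ‖f w‖ * expR (κ * w.re - c' * w.im)
            ≤ (M * expR (c' * ‖w‖)) * expR (κ * ‖w‖ + c' * ‖w‖) :=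
          mul_le_mul h1 (Real.exp_le_exp.2 h2) (Real.exp_pos _).le
            (by positivity)
        rw [Real.norm_of_nonneg (Real.exp_pos _).le]
        calc ‖f w‖ * expR (κ * w.re - c' * w.im)
            ≤ M * (expR (c' * ‖w‖) * expR (κ * ‖w‖ + c' * ‖w‖)) := by
              rw [← mul_assoc]; exact this
          _ = M * expR ((κ + 2 * c') * ‖w‖ ^ (1:ℝ)) := by
              rw [← Real.exp_add, Real.rpow_one]; ring_nf
      · intro x hx
        rw [hFabs]
        have : ‖f x‖ * expR (κ * (x:ℂ).re - c' * (x:ℂ).im)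
            ≤ C * expR (-κ * x) * expR (κ * x) := by
          simp only [Complex.ofReal_re, Complex.ofReal_im, mul_zero, sub_zero]
          exact mul_le_mul_of_nonneg_right (hr x hx) (Real.exp_pos _).le
        refine le_trans this (le_trans (le_of_eq ?_) (le_max_left C M))
        rw [mul_assoc, ← Real.exp_add]
        simp
      · intro x hx
        rw [hFabs]
        have hre : ((x:ℂ) * I).re = 0 := by simp
        have him : ((x:ℂ) * I).im = x := by simp
        rw [hre, him]
        have habs : ‖(x:ℂ) * I‖ = x := by
          rw [norm_mul, Complex.norm_I, Complex.norm_real, Real.norm_eq_abs, mul_one, _root_.abs_of_nonneg hx]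
        have := hg ((x:ℂ) * I)
        rw [habs] at this
        calc ‖f ((x:ℂ) * I)‖ * expR (κ * 0 - c' * x)
            ≤ M * expR (c' * x) * expR (κ * 0 - c' * x) :=
              mul_le_mul_of_nonneg_right this (Real.exp_pos _).le
          _ = M := by rw [mul_assoc, ← Real.exp_add]; simp
          _ ≤ max C M := le_max_right _ _
    rw [hFabs] at key
    have : ‖f z‖ = ‖f z‖ * expR (κ * z.re - c' * z.im)
        * expR (-κ * z.re + c' * z.im) := by
      rw [mul_assoc, ← Real.exp_add]; ring_nf; simp
    rw [this, _root_.abs_of_nonneg hzim]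
    exact mul_le_mul_of_nonneg_right key (Real.exp_pos _).le
  · -- fourth quadrant
    set F : ℂ → ℂ := fun w => f w * Complex.exp ((κ - c' * I) * w) with hF
    have hFabs : ∀ w : ℂ, ‖F w‖
        = ‖f w‖ * expR (κ * w.re + c' * w.im) := by
      intro w
      have hre : ((↑κ - ↑c' * I) * w).re = κ * w.re + c' * w.im := by
        simp [Complex.sub_re, Complex.mul_re]
      simp only [hF, norm_mul, Complex.norm_exp, hre]
    have key : ‖F z‖ ≤ max C M := by
      have := PhragmenLindelof.quadrant_IV (f := F) (C := max C M)
        ((hf.mul ((differentiable_const _).mul differentiable_id).cexp).diffContOnCl)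
        ?_ ?_ ?_ hzre hzim.le
      · simpa using this
      · refine ⟨1, one_lt_two, κ + 2 * c', ?_⟩
        refine IsBigO.of_bound M ?_
        filter_upwards with w
        rw [hFabs]
        have h1 : ‖f w‖ ≤ M * expR (c' * ‖w‖) := hg w
        have h2 : κ * w.re + c' * w.im ≤ κ * ‖w‖ + c' * ‖w‖ := by
          have := Complex.abs_re_le_norm w
          have := Complex.abs_im_le_norm w
          nlinarith [le_abs_self w.re, le_abs_self w.im]
        have : ‖f w‖ * expR (κ * w.re + c' * w.im)
            ≤ (M * expR (c' * ‖w‖)) * expR (κ * ‖w‖ + c' * ‖w‖) :=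
          mul_le_mul h1 (Real.exp_le_exp.2 h2) (Real.exp_pos _).le (by positivity)
        rw [Real.norm_of_nonneg (Real.exp_pos _).le]
        calc ‖f w‖ * expR (κ * w.re + c' * w.im)
            ≤ M * (expR (c' * ‖w‖) * expR (κ * ‖w‖ + c' * ‖w‖)) := by
              rw [← mul_assoc]; exact this
          _ = M * expR ((κ + 2 * c') * ‖w‖ ^ (1:ℝ)) := by
              rw [← Real.exp_add, Real.rpow_one]; ring_nf
      · intro x hx
        rw [hFabs]
        have : ‖f x‖ * expR (κ * (x:ℂ).re + c' * (x:ℂ).im)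
            ≤ C * expR (-κ * x) * expR (κ * x) := by
          simp only [Complex.ofReal_re, Complex.ofReal_im, mul_zero, add_zero]
          exact mul_le_mul_of_nonneg_right (hr x hx) (Real.exp_pos _).le
        refine le_trans this (le_trans (le_of_eq ?_) (le_max_left C M))
        rw [mul_assoc, ← Real.exp_add]
        simp
      · intro x hx
        rw [hFabs]
        have hre : ((x:ℂ) * I).re = 0 := by simp
        have him : ((x:ℂ) * I).im = x := by simp
        rw [hre, him]
        have habs : ‖(x:ℂ) * I‖ = -x := by
          rw [norm_mul, Complex.norm_I, Complex.norm_real, Real.norm_eq_abs, mul_one, _root_.abs_of_nonpos hx]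
        have := hg ((x:ℂ) * I)
        rw [habs] at this
        calc ‖f ((x:ℂ) * I)‖ * expR (κ * 0 + c' * x)
            ≤ M * expR (c' * -x) * expR (κ * 0 + c' * x) :=
              mul_le_mul_of_nonneg_right this (Real.exp_pos _).le
          _ = M := by rw [mul_assoc, ← Real.exp_add]; ring_nf; simp
          _ ≤ max C M := le_max_right _ _
    rw [hFabs] at key
    have : ‖f z‖ = ‖f z‖ * expR (κ * z.re + c' * z.im)
        * expR (-κ * z.re - c' * z.im) := by
      rw [mul_assoc, ← Real.exp_add]; ring_nf; simp
    rw [this, _root_.abs_of_neg hzim]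
    have : -κ * z.re + c' * -z.im = -κ * z.re - c' * z.im := by ring
    rw [this]
    exact mul_le_mul_of_nonneg_right key (Real.exp_pos _).le

/-- Global bound combining the four quadrants. -/
lemma PL_global {f : ℂ → ℂ} (hf : Differentiable ℂ f) {M C c' κ : ℝ}
    (hC : 0 < C) (hM : 0 < M) (hc' : 0 < c') (hκ : 0 ≤ κ)
    (hg : ∀ z, ‖f z‖ ≤ M * expR (c' * ‖z‖))
    (hr : ∀ x : ℝ, ‖f x‖ ≤ C * expR (-κ * |x|)) :
    ∀ z : ℂ, ‖f z‖ ≤ max C M * expR (-κ * |z.re| + c' * |z.im|) := by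
  intro z
  rcases le_or_gt 0 z.re with hzre | hzre
  · have := PL_right hf hC hM hc' hκ hg (fun x hx => by
      simpa [_root_.abs_of_nonneg hx] using hr x) z hzre
    rwa [_root_.abs_of_nonneg hzre]
  · have hrec : ∀ x : ℝ, 0 ≤ x → ‖f (-(x:ℂ))‖ ≤ C * expR (-κ * x) := by
      intro x hx
      have e : (-(x:ℂ)) = ((-x : ℝ) : ℂ) := by push_cast; ring
      have := hr (-x)
      rw [abs_neg, _root_.abs_of_nonneg hx] at this
      rwa [e]
    have := PL_right (f := fun w => f (-w)) (hf.comp differentiable_neg) hC hM hc' hκ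
      (fun w => by simpa using hg (-w)) (fun x hx => by simpa using hrec x hx)
      (-z) (by simp [Complex.neg_re]; linarith)
    simp only [neg_neg, Complex.neg_re, Complex.neg_im] at this
    rw [abs_neg] at this
    rwa [_root_.abs_of_neg hzre]

lemma re_cpow {w : ℂ} (hw : w ≠ 0) (r : ℝ) :
    (w ^ ((r:ℝ):ℂ)).re = ‖w‖ ^ r * Real.cos (r * Complex.arg w) := by
  rw [Complex.cpow_def_of_ne_zero hw]
  rw [Complex.exp_re]
  have h1 : (Complex.log w * ((r:ℝ):ℂ)).re = Real.log (‖w‖) * r := by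
    simp [Complex.mul_re, Complex.log_re]
  have h2 : (Complex.log w * ((r:ℝ):ℂ)).im = Complex.arg w * r := by
    simp [Complex.mul_im, Complex.log_im]
  rw [h1, h2]
  rw [Real.rpow_def_of_pos (norm_pos_iff.2 hw)]
  ring_nf

lemma eq_zero_of_all_decay {f : ℂ → ℂ} (hf : Differentiable ℂ f) {M c' : ℝ}
    (hM : 0 < M) (hc' : 0 < c')
    (hg : ∀ z, ‖f z‖ ≤ M * expR (c' * ‖z‖))
    (hd : ∀ δ : ℝ, 0 < δ → ∃ C, 0 < C ∧ ∀ x : ℝ, ‖f x‖ ≤ C * expR (-δ * |x|)) :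
    ∀ z, f z = 0 := by
  have hGlob : ∀ δ : ℝ, 0 < δ → ∃ K, 0 < K ∧ ∀ z : ℂ,
      ‖f z‖ ≤ K * expR (-δ * |z.re| + c' * |z.im|) := by
    intro δ hδ
    obtain ⟨C, hC, hCb⟩ := hd δ hδ
    exact ⟨max C M, lt_max_of_lt_left hC, PL_global hf hC hM hc' hδ.le hg hCb⟩
  set φ : ℂ → ℂ := fun w => w ^ (((3/2 : ℝ) : ℝ):ℂ) with hφ
  set u : ℂ → ℂ := fun w => f (φ w) with hu
  have habsφ : ∀ w, ‖φ w‖ = ‖w‖ ^ (3/2 : ℝ) := fun w =>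
    Complex.norm_cpow_real w (3/2)
  have hcos : Real.cos ((3/2 : ℝ) * (π/2)) = -(Real.sqrt 2 / 2) := by
    have : (3/2 : ℝ) * (π/2) = π - π/4 := by ring
    rw [this, Real.cos_pi_sub, Real.cos_pi_div_four]
  have hrecomp : ∀ x : ℝ, x ≠ 0 → (φ ((x:ℂ) * I)).re = |x| ^ (3/2:ℝ) * -(Real.sqrt 2 / 2) := by
    intro x hx
    have hwne : (x:ℂ) * I ≠ 0 := by
      simp [Complex.ext_iff, hx]
    have habs : ‖(x:ℂ) * I‖ = |x| := by
      rw [norm_mul, Complex.norm_I, Complex.norm_real, Real.norm_eq_abs, mul_one]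
    rcases lt_or_gt_of_ne hx with hneg | hpos
    · have harg : Complex.arg ((x:ℂ) * I) = -(π/2) := by
        have : (x:ℂ) * I = ((-x : ℝ):ℂ) * (-I) := by push_cast; ring
        rw [this, Complex.arg_real_mul _ (by linarith : (0:ℝ) < -x), Complex.arg_neg_I]
      rw [hφ]
      rw [re_cpow hwne, habs, harg]
      congr 1
      rw [show (3/2:ℝ) * -(π/2) = -((3/2:ℝ) * (π/2)) by ring, Real.cos_neg, hcos]
    · have harg : Complex.arg ((x:ℂ) * I) = π/2 := by
        rw [Complex.arg_real_mul _ hpos, Complex.arg_I]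
      rw [hφ]
      rw [re_cpow hwne, habs, harg, hcos]
  have hEq : EqOn u 0 {z : ℂ | 0 ≤ z.re} := by
    apply PhragmenLindelof.eq_zero_on_right_half_plane_of_superexponential_decay
    · -- DiffContOnCl
      refine ⟨fun w hw => DifferentiableAt.differentiableWithinAt ?_, ?_⟩
      · exact (hf.differentiableAt).comp w
          (DifferentiableAt.cpow differentiableAt_id (differentiableAt_const _)
            (Or.inl hw))
      · rw [closure_setOf_lt_re]
        intro w hw
        rcases eq_or_ne w 0 with rfl | hwne
        · refine (hf.continuous.continuousAt.comp ?_).continuousWithinAt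
          have h32 : (0:ℝ) < (((3/2:ℝ):ℝ):ℂ).re := by norm_num
          have h1 := Complex.continuousAt_cpow_zero_of_re_pos h32
          have h2 : ContinuousAt (fun w : ℂ => (w, (((3/2:ℝ):ℝ):ℂ))) 0 :=
            (continuous_id.prodMk continuous_const).continuousAt
          exact ContinuousAt.comp (x := (0:ℂ)) h1 h2
        · have hwslit : w ∈ Complex.slitPlane := by
            have hw' : (0:ℝ) ≤ w.re := hw
            rcases lt_or_eq_of_le hw' with h | h
            · exact Or.inl h
            · right
              intro him
              exact hwne (Complex.ext h.symm him)
          exact (hf.continuous.continuousAt.comp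
            (continuousAt_cpow_const hwslit)).continuousWithinAt
    · -- growth
      refine ⟨3/2, by norm_num, c', IsBigO.of_bound M ?_⟩
      filter_upwards with w
      rw [Real.norm_of_nonneg (Real.exp_pos _).le]
      calc ‖u w‖ ≤ M * expR (c' * ‖φ w‖) := hg (φ w)
        _ = M * expR (c' * ‖w‖ ^ (3/2:ℝ)) := by rw [habsφ]
    · -- superpolynomial decay on ℝ+
      intro n
      obtain ⟨C, hC, hCb⟩ := hd (n+1) (by positivity)
      have hev : ∀ᶠ x : ℝ in atTop, expR x ^ n * ‖u x‖ ≤ C * expR (-x) := by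
        filter_upwards [eventually_ge_atTop 1] with x hx1
        have hx0 : (0:ℝ) ≤ x := by linarith
        have hφx : φ ((x:ℝ):ℂ) = ((x ^ (3/2:ℝ) : ℝ) : ℂ) := by
          rw [hφ]; exact (Complex.ofReal_cpow hx0 (3/2)).symm
        have hxx : x ≤ x ^ (3/2:ℝ) := by
          nth_rewrite 1 [← Real.rpow_one x]
          exact Real.rpow_le_rpow_of_exponent_le hx1 (by norm_num)
        have hb : ‖u x‖ ≤ C * expR (-(n+1) * (x ^ (3/2:ℝ))) := by
          rw [hu]
          simp only
          rw [hφx]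
          have := hCb (x ^ (3/2:ℝ))
          rwa [_root_.abs_of_nonneg (Real.rpow_nonneg hx0 _)] at this
        calc expR x ^ n * ‖u x‖ ≤ expR x ^ n * (C * expR (-(n+1) * (x ^ (3/2:ℝ)))) := by
              apply mul_le_mul_of_nonneg_left hb (by positivity)
          _ = C * (expR ((n:ℝ) * x) * expR (-(n+1) * (x ^ (3/2:ℝ)))) := by
              rw [← Real.exp_nat_mul]; ring
          _ = C * expR ((n:ℝ) * x + -(n+1) * (x ^ (3/2:ℝ))) := by
              rw [← Real.exp_add]
          _ ≤ C * expR (-x) := by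
              apply mul_le_mul_of_nonneg_left _ hC.le
              apply Real.exp_le_exp.2
              nlinarith [hxx]
      have hpos : ∀ᶠ x : ℝ in atTop, 0 ≤ expR x ^ n * ‖u x‖ := by
        filter_upwards with x; positivity
      have hlim : Tendsto (fun x : ℝ => C * expR (-x)) atTop (𝓝 0) := by
        simpa using (Real.tendsto_exp_neg_atTop_nhds_zero).const_mul C
      exact squeeze_zero' hpos hev hlim
    · -- bounded on the imaginary axis
      obtain ⟨K, hK, hKb⟩ := hGlob (4 * c') (by positivity)
      refine ⟨K + M, fun x => ?_⟩
      rcases eq_or_ne x 0 with rfl | hx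
      · have hb := hg (φ (((0:ℝ):ℂ) * I))
        have h0 : ‖φ (((0:ℝ):ℂ) * I)‖ = 0 := by
          rw [habsφ]
          simp [Real.zero_rpow (by norm_num : (3/2:ℝ) ≠ 0)]
        rw [h0, mul_zero, Real.exp_zero, mul_one] at hb
        calc ‖u (((0:ℝ):ℂ) * I)‖ ≤ M := hb
          _ ≤ K + M := by linarith
      · set z := φ ((x:ℂ) * I) with hz
        have hre : z.re = |x| ^ (3/2:ℝ) * -(Real.sqrt 2 / 2) := hrecomp x hx
        have habsz : ‖z‖ = |x| ^ (3/2:ℝ) := by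
          rw [hz, habsφ, norm_mul, Complex.norm_I, Complex.norm_real, Real.norm_eq_abs, mul_one]
        have hsqrt2 : (1:ℝ) ≤ Real.sqrt 2 := by
          nlinarith [Real.sq_sqrt (by norm_num : (0:ℝ) ≤ 2), Real.sqrt_nonneg 2]
        set t := |x| ^ (3/2:ℝ) with ht
        have ht0 : 0 ≤ t := Real.rpow_nonneg (abs_nonneg x) _
        have hzre : |z.re| ≥ t / 2 := by
          rw [hre, abs_mul, abs_neg, _root_.abs_of_nonneg ht0]
          have : |Real.sqrt 2 / 2| = Real.sqrt 2 / 2 := by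
            rw [_root_.abs_of_nonneg]; positivity
          rw [this]
          nlinarith
        have hzim : |z.im| ≤ t := by
          rw [← habsz]; exact Complex.abs_im_le_norm z
        have hexp : -(4*c') * |z.re| + c' * |z.im| ≤ 0 := by nlinarith
        calc ‖u ((x:ℂ) * I)‖ = ‖f z‖ := by rfl
          _ ≤ K * expR (-(4*c') * |z.re| + c' * |z.im|) := hKb z
          _ ≤ K * 1 := mul_le_mul_of_nonneg_left (Real.exp_le_one_iff.2 hexp) hK.le
          _ ≤ K + M := by linarith
  -- f vanishes on the nonnegative real axis
  have hreal : ∀ t : ℝ, 0 ≤ t → f t = 0 := by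
    intro t ht
    have h23 : (0:ℝ) ≤ t ^ (2/3 : ℝ) := Real.rpow_nonneg ht _
    have hmem : ((t ^ (2/3:ℝ) : ℝ) : ℂ) ∈ {z : ℂ | 0 ≤ z.re} := by simp [h23]
    have h0 := hEq hmem
    have hφt : φ ((t ^ (2/3:ℝ) : ℝ) : ℂ) = (t : ℂ) := by
      rw [hφ]
      show ((t ^ (2/3:ℝ) : ℝ) : ℂ) ^ (((3/2:ℝ):ℝ):ℂ) = (t:ℂ)
      rw [← Complex.ofReal_cpow h23]
      norm_cast
      rw [← Real.rpow_mul ht]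
      norm_num
    rw [hu] at h0
    simp only at h0
    rw [hφt] at h0
    exact h0
  -- identity theorem
  have hfreq : ∃ᶠ z in nhdsWithin (1:ℂ) {(1:ℂ)}ᶜ, f z = 0 := by
    have hseq : Tendsto (fun n : ℕ => (((1 + (n+1:ℝ)⁻¹ : ℝ)):ℂ)) atTop (𝓝[≠] (1:ℂ)) := by
      rw [tendsto_nhdsWithin_iff]
      constructor
      · have : Tendsto (fun n : ℕ => (1 + (n+1:ℝ)⁻¹ : ℝ)) atTop (𝓝 1) := by
          have h1 : Tendsto (fun n : ℕ => ((n:ℝ)+1)⁻¹) atTop (𝓝 0) :=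
            tendsto_one_div_add_atTop_nhds_zero_nat.congr (by intro n; rw [one_div])
          simpa using (tendsto_const_nhds (x := (1:ℝ))).add h1
        have h2 : Tendsto (fun n : ℕ => (((1 + (n+1:ℝ)⁻¹ : ℝ)):ℂ)) atTop (𝓝 ((1:ℝ):ℂ)) :=
          (Complex.continuous_ofReal.tendsto 1).comp this
        rw [Complex.ofReal_one] at h2
        exact h2
      · filter_upwards with n
        simp only [Set.mem_compl_iff, Set.mem_singleton_iff]
        intro h
        have : (1 + (n+1:ℝ)⁻¹ : ℝ) = 1 := by exact_mod_cast h
        have hpos : (0:ℝ) < ((n:ℝ)+1)⁻¹ := by positivity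
        linarith
    exact hseq.frequently (Frequently.of_forall fun n => hreal _ (by positivity))
  have hana : AnalyticOnNhd ℂ f Set.univ := analyticOnNhd_univ_iff_differentiable.2 hf
  have := hana.eqOn_zero_of_preconnected_of_frequently_eq_zero isPreconnected_univ
    (Set.mem_univ (1:ℂ)) hfreq
  intro z
  exact this (Set.mem_univ z)



noncomputable def bδ (n : ℕ) : ℝ := (1/2:ℝ)^(n+1)
noncomputable def bm (s : ℕ → ℝ) (n : ℕ) : ℕ := ⌈bδ n * s n⌉₊
noncomputable def bc (s : ℕ → ℝ) (n : ℕ) : ℝ :=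
  ((n:ℝ)+1) * Real.exp (bδ n * s n) / s n ^ (2 * bm s n)
noncomputable def bh (s : ℕ → ℝ) (z : ℂ) : ℂ := ∑' n, ((bc s n : ℝ) : ℂ) * z ^ (2 * bm s n)

lemma bδ_pos (n : ℕ) : 0 < bδ n := by rw [bδ]; positivity

lemma bδ_le (n : ℕ) : 4 * bδ n ≤ 2 := by
  rw [bδ]
  have h1 : ((1:ℝ)/2)^(n+1) ≤ (1/2)^1 :=
    pow_le_pow_of_le_one (by norm_num) (by norm_num) (by omega)
  norm_num at h1 ⊢
  linarith

lemma bs_pos {s : ℕ → ℝ} (hs : ∀ n, (8:ℝ)^(n+1) ≤ s n) (n : ℕ) : 0 < s n :=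
  lt_of_lt_of_le (by positivity) (hs n)

lemma bδs_ge {s : ℕ → ℝ} (hs : ∀ n, (8:ℝ)^(n+1) ≤ s n) (n : ℕ) :
    (4:ℝ)^(n+1) ≤ bδ n * s n := by
  have h1 : bδ n * (8:ℝ)^(n+1) ≤ bδ n * s n :=
    mul_le_mul_of_nonneg_left (hs n) (bδ_pos n).le
  have h2 : bδ n * (8:ℝ)^(n+1) = (4:ℝ)^(n+1) := by
    rw [bδ, ← mul_pow]; norm_num
  linarith

lemma bc_pos {s : ℕ → ℝ} (hs : ∀ n, (8:ℝ)^(n+1) ≤ s n) (n : ℕ) : 0 < bc s n := by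
  have h := bs_pos hs n
  rw [bc]; positivity

lemma bm_ge (s : ℕ → ℝ) (n : ℕ) : bδ n * s n ≤ (bm s n : ℝ) := Nat.le_ceil _

lemma bm_le {s : ℕ → ℝ} (hs : ∀ n, (8:ℝ)^(n+1) ≤ s n) (n : ℕ) :
    (bm s n : ℝ) ≤ bδ n * s n + 1 := by
  have h0 : 0 ≤ bδ n * s n := mul_nonneg (bδ_pos n).le (bs_pos hs n).le
  exact (Nat.ceil_lt_add_one h0).le

/-- The fundamental term estimate. -/
lemma bTb {s : ℕ → ℝ} (hs : ∀ n, (8:ℝ)^(n+1) ≤ s n) (n : ℕ) (r : ℝ) (hr : 0 ≤ r) :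
    bc s n * r ^ (2 * bm s n) ≤ (1/2:ℝ)^(n+1) * expR (4 * bδ n * r) := by
  have hsp := bs_pos hs n
  have hδp := bδ_pos n
  have hδs := bδs_ge hs n
  have h41 : (1:ℝ) ≤ (4:ℝ)^(n+1) := one_le_pow₀ (by norm_num : (1:ℝ) ≤ 4)
  set m : ℕ := bm s n with hm
  have hm1 : bδ n * s n ≤ (m:ℝ) := bm_ge s n
  have hm2 : (m:ℝ) ≤ bδ n * s n + 1 := bm_le hs n
  have e1 : bc s n * r ^ (2*m) = ((n:ℝ)+1) * Real.exp (bδ n * s n) * (r / s n) ^ (2*m) := by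
    rw [div_pow, bc, ← hm]
    field_simp
  have e2 : (r / s n) ^ (2*m) ≤ expR ((2*(m:ℝ)) * (r / s n) - 2*(m:ℝ)) := by
    have h1 : r / s n ≤ expR (r / s n - 1) := by
      have := Real.add_one_le_exp (r / s n - 1)
      linarith
    calc (r / s n) ^ (2*m) ≤ (expR (r / s n - 1)) ^ (2*m) :=
          pow_le_pow_left₀ (by positivity) h1 _
      _ = expR (((2*m : ℕ):ℝ) * (r / s n - 1)) := by rw [← Real.exp_nat_mul]
      _ = expR ((2*(m:ℝ)) * (r / s n) - 2*(m:ℝ)) := by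
          congr 1; push_cast; ring
  have e3 : bδ n * s n + ((2*(m:ℝ)) * (r / s n) - 2*(m:ℝ)) ≤ -(bδ n * s n) + 4 * bδ n * r := by
    have hterm : (2*(m:ℝ)) * (r / s n) ≤ (2 * bδ n + 2 / s n) * r := by
      have h1 : (2*(m:ℝ)) / s n ≤ 2 * bδ n + 2 / s n := by
        rw [div_le_iff₀ hsp, add_mul, div_mul_cancel₀ _ hsp.ne']
        nlinarith
      calc (2*(m:ℝ)) * (r / s n) = ((2*(m:ℝ)) / s n) * r := by ring
        _ ≤ (2 * bδ n + 2 / s n) * r := mul_le_mul_of_nonneg_right h1 hr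
    have h2s : 2 / s n ≤ 2 * bδ n := by
      rw [div_le_iff₀ hsp]
      nlinarith
    have hrterm : (2 * bδ n + 2 / s n) * r ≤ 4 * bδ n * r := by
      apply mul_le_mul_of_nonneg_right _ hr
      linarith
    nlinarith
  have e4 : ((n:ℝ)+1) * expR (-(bδ n * s n)) ≤ (1/2:ℝ)^(n+1) := by
    have hn2 : ((n:ℝ)+1) ≤ (2:ℝ)^(n+1) := by
      have := Nat.lt_two_pow_self (n := n)
      have h' : (n:ℝ) < (2:ℝ)^n := by exact_mod_cast this
      have h'' : (2:ℝ)^n ≤ (2:ℝ)^(n+1) := by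
        apply pow_le_pow_right₀ (by norm_num) (by omega)
      have hp1 : (1:ℝ) ≤ (2:ℝ)^n := one_le_pow₀ (by norm_num : (1:ℝ) ≤ 2)
      have he : (2:ℝ)^(n+1) = 2 * (2:ℝ)^n := by rw [pow_succ]; ring
      linarith
    have hexp : expR (-(bδ n * s n)) ≤ ((4:ℝ)^(n+1))⁻¹ := by
      rw [Real.exp_neg]
      apply inv_anti₀ (by positivity)
      calc (4:ℝ)^(n+1) ≤ bδ n * s n := hδs
        _ ≤ expR (bδ n * s n) := by
            have := Real.add_one_le_exp (bδ n * s n); linarith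
    calc ((n:ℝ)+1) * expR (-(bδ n * s n)) ≤ (2:ℝ)^(n+1) * ((4:ℝ)^(n+1))⁻¹ := by
          apply mul_le_mul hn2 hexp (Real.exp_pos _).le (by positivity)
      _ = (1/2:ℝ)^(n+1) := by
          rw [← inv_pow, ← mul_pow]
          norm_num
  calc bc s n * r ^ (2*m)
      = ((n:ℝ)+1) * Real.exp (bδ n * s n) * (r / s n) ^ (2*m) := e1
    _ ≤ ((n:ℝ)+1) * Real.exp (bδ n * s n) * expR ((2*(m:ℝ)) * (r / s n) - 2*(m:ℝ)) := by
        apply mul_le_mul_of_nonneg_left e2 (by positivity)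
    _ = ((n:ℝ)+1) * expR (bδ n * s n + ((2*(m:ℝ)) * (r / s n) - 2*(m:ℝ))) := by
        rw [mul_assoc, ← Real.exp_add]
    _ ≤ ((n:ℝ)+1) * expR (-(bδ n * s n) + 4 * bδ n * r) := by
        apply mul_le_mul_of_nonneg_left (Real.exp_le_exp.2 e3) (by positivity)
    _ = ((n:ℝ)+1) * expR (-(bδ n * s n)) * expR (4 * bδ n * r) := by
        rw [Real.exp_add, ← mul_assoc]
    _ ≤ (1/2:ℝ)^(n+1) * expR (4 * bδ n * r) :=
        mul_le_mul_of_nonneg_right e4 (Real.exp_pos _).le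

lemma bh_term_norm (s : ℕ → ℝ) (n : ℕ) (z : ℂ) :
    ‖((bc s n : ℝ) : ℂ) * z ^ (2 * bm s n)‖ = |bc s n| * ‖z‖ ^ (2 * bm s n) := by
  rw [norm_mul, Complex.norm_real, Real.norm_eq_abs, norm_pow]

lemma bh_term_bound {s : ℕ → ℝ} (hs : ∀ n, (8:ℝ)^(n+1) ≤ s n) (n : ℕ) (z : ℂ)
    {R : ℝ} (hzR : ‖z‖ ≤ R) :
    ‖((bc s n : ℝ) : ℂ) * z ^ (2 * bm s n)‖ ≤ (1/2:ℝ)^(n+1) * expR (2 * R) := by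
  have hR : 0 ≤ R := le_trans (norm_nonneg z) hzR
  rw [bh_term_norm, _root_.abs_of_nonneg (bc_pos hs n).le]
  calc bc s n * ‖z‖ ^ (2 * bm s n) ≤ bc s n * R ^ (2 * bm s n) := by
        apply mul_le_mul_of_nonneg_left (pow_le_pow_left₀ (norm_nonneg z) hzR _)
          (bc_pos hs n).le
    _ ≤ (1/2:ℝ)^(n+1) * expR (4 * bδ n * R) := bTb hs n R hR
    _ ≤ (1/2:ℝ)^(n+1) * expR (2 * R) := by
        apply mul_le_mul_of_nonneg_left _ (by positivity)
        apply Real.exp_le_exp.2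
        exact mul_le_mul_of_nonneg_right (bδ_le n) hR

lemma bgeom_summable : Summable (fun n : ℕ => (1/2:ℝ)^(n+1)) := by
  have := summable_geometric_of_lt_one (show (0:ℝ) ≤ 1/2 by norm_num)
    (show (1/2:ℝ) < 1 by norm_num)
  exact (this.mul_left (1/2)).congr (fun n => by rw [pow_succ]; ring)

lemma bgeom_tsum_le : ∑' n : ℕ, (1/2:ℝ)^(n+1) ≤ 1 := by
  have h : ∀ n : ℕ, (1/2:ℝ)^(n+1) = (1/2) * (1/2)^n := fun n => by rw [pow_succ]; ring
  rw [tsum_congr h, tsum_mul_left, tsum_geometric_of_lt_one (by norm_num) (by norm_num)]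
  norm_num

lemma bh_summable {s : ℕ → ℝ} (hs : ∀ n, (8:ℝ)^(n+1) ≤ s n) (z : ℂ) :
    Summable (fun n => ((bc s n : ℝ) : ℂ) * z ^ (2 * bm s n)) := by
  apply Summable.of_norm
  apply Summable.of_nonneg_of_le (fun n => norm_nonneg _)
    (fun n => bh_term_bound hs n z (le_refl _))
  exact bgeom_summable.mul_right _

lemma bh_diff {s : ℕ → ℝ} (hs : ∀ n, (8:ℝ)^(n+1) ≤ s n) : Differentiable ℂ (bh s) := by
  intro z₀
  set R : ℝ := ‖z₀‖ + 1 with hR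
  have hball : z₀ ∈ Metric.ball (0:ℂ) R := by
    rw [Metric.mem_ball, Complex.dist_eq, sub_zero, hR]
    linarith
  have hdOn : DifferentiableOn ℂ (fun w => ∑' n, ((bc s n : ℝ) : ℂ) * w ^ (2 * bm s n))
      (Metric.ball (0:ℂ) R) := by
    apply differentiableOn_tsum_of_summable_norm
      (u := fun n => (1/2:ℝ)^(n+1) * expR (2 * R))
      (bgeom_summable.mul_right _)
      (fun n => ((differentiable_const _).mul (differentiable_pow _)).differentiableOn)
      Metric.isOpen_ball
    intro n w hw
    apply bh_term_bound hs n w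
    simp only [Metric.mem_ball, Complex.dist_eq, sub_zero] at hw
    exact hw.le
  have : DifferentiableAt ℂ (fun w => ∑' n, ((bc s n : ℝ) : ℂ) * w ^ (2 * bm s n)) z₀ :=
    hdOn.differentiableAt (Metric.isOpen_ball.mem_nhds hball)
  exact this

set_option maxHeartbeats 1000000 in
lemma bh_growth {s : ℕ → ℝ} (hs : ∀ n, (8:ℝ)^(n+1) ≤ s n) {ε : ℝ} (hε : 0 < ε) :
    ∃ D, 0 < D ∧ ∀ z : ℂ, ‖bh s z‖ ≤ D * expR (ε * ‖z‖) := by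
  obtain ⟨J, hJ⟩ : ∃ J : ℕ, (1/2:ℝ)^J < ε/4 :=
    exists_pow_lt_of_lt_one (by positivity) (by norm_num)
  have hβ : ∀ n, J ≤ n → 4 * bδ n ≤ ε := by
    intro n hn
    have h1 : bδ n ≤ (1/2:ℝ)^J := by
      rw [bδ]; exact pow_le_pow_of_le_one (by norm_num) (by norm_num) (by omega)
    nlinarith [bδ_pos n]
  set e : ℕ → ℝ := fun n =>
    if n < J then bc s n * (2 * bm s n).factorial / ε^(2 * bm s n) else (1/2:ℝ)^(n+1) with he
  have he_nonneg : ∀ n, 0 ≤ e n := by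
    intro n; rw [he]; dsimp only
    split
    · exact div_nonneg (mul_nonneg (bc_pos hs n).le (Nat.cast_nonneg _)) (pow_nonneg hε.le _)
    · positivity
  have hesum : Summable e := by
    rw [← summable_nat_add_iff J]
    have hee : (fun n => e (n + J)) = fun n => (1/2:ℝ)^(n + J + 1) := by
      funext n; rw [he]; dsimp only; rw [if_neg (by omega)]
    rw [hee]
    exact (summable_nat_add_iff J).2 bgeom_summable
  have hterm : ∀ (n : ℕ) (z : ℂ),
      ‖((bc s n : ℝ):ℂ) * z ^ (2 * bm s n)‖ ≤ e n * expR (ε * ‖z‖) := by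
    intro n z
    rw [bh_term_norm, _root_.abs_of_nonneg (bc_pos hs n).le, he]
    dsimp only
    by_cases hn : n < J
    · rw [if_pos hn]
      set k := 2 * bm s n with hk
      have hx : 0 ≤ ε * ‖z‖ := by positivity
      have h1 : (ε * ‖z‖)^k / (k.factorial : ℝ) ≤ expR (ε * ‖z‖) := by
        calc (ε * ‖z‖)^k / (k.factorial : ℝ)
            ≤ ∑ i ∈ Finset.range (k+1), (ε * ‖z‖)^i / (i.factorial : ℝ) := by
              apply Finset.single_le_sum
                (f := fun i => (ε * ‖z‖)^i / (i.factorial : ℝ))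
                (fun i _ => div_nonneg (pow_nonneg hx _) (Nat.cast_nonneg _)) (Finset.mem_range.2 (Nat.lt_succ_self k))
          _ ≤ expR (ε * ‖z‖) := Real.sum_le_exp_of_nonneg hx _
      have h2 : ‖z‖ ^ k ≤ (k.factorial:ℝ) / ε^k * expR (ε * ‖z‖) := by
        rw [mul_pow, div_le_iff₀ (show (0:ℝ) < (k.factorial:ℝ) from Nat.cast_pos.2 k.factorial_pos)] at h1
        rw [div_mul_eq_mul_div, le_div_iff₀ (by positivity)]
        calc ‖z‖ ^ k * ε^k = ε^k * ‖z‖^k := by ring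
          _ ≤ expR (ε * ‖z‖) * (k.factorial:ℝ) := h1
          _ = (k.factorial:ℝ) * expR (ε * ‖z‖) := by ring
      calc bc s n * ‖z‖ ^ k
          ≤ bc s n * ((k.factorial:ℝ) / ε^k * expR (ε * ‖z‖)) :=
            mul_le_mul_of_nonneg_left h2 (bc_pos hs n).le
        _ = bc s n * (k.factorial:ℝ) / ε^k * expR (ε * ‖z‖) := by ring
    · rw [if_neg hn]
      calc bc s n * ‖z‖ ^ (2 * bm s n)
          ≤ (1/2:ℝ)^(n+1) * expR (4 * bδ n * ‖z‖) :=
            bTb hs n _ (norm_nonneg z)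
        _ ≤ (1/2:ℝ)^(n+1) * expR (ε * ‖z‖) := by
            apply mul_le_mul_of_nonneg_left _ (by positivity)
            apply Real.exp_le_exp.2
            exact mul_le_mul_of_nonneg_right (hβ n (by omega)) (norm_nonneg z)
  have h0 : 0 ≤ ∑' n, e n := tsum_nonneg he_nonneg
  refine ⟨∑' n, e n + 1, by linarith, fun z => ?_⟩
  have hsumnorm : Summable (fun n => ‖((bc s n : ℝ):ℂ) * z ^ (2 * bm s n)‖) :=
    Summable.of_nonneg_of_le (fun n => norm_nonneg _) (fun n => hterm n z)
      (hesum.mul_right _)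
  calc ‖bh s z‖ = ‖∑' n, ((bc s n : ℝ):ℂ) * z ^ (2 * bm s n)‖ := by
        rw [bh]
    _ ≤ ∑' n, ‖((bc s n : ℝ):ℂ) * z ^ (2 * bm s n)‖ := norm_tsum_le_tsum_norm hsumnorm
    _ ≤ ∑' n, e n * expR (ε * ‖z‖) :=
        Summable.tsum_le_tsum (fun n => hterm n z) hsumnorm (hesum.mul_right _)
    _ = (∑' n, e n) * expR (ε * ‖z‖) := tsum_mul_right
    _ ≤ (∑' n, e n + 1) * expR (ε * ‖z‖) :=
        mul_le_mul_of_nonneg_right (by linarith) (Real.exp_pos _).le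

lemma bh_lower {s : ℕ → ℝ} (hs : ∀ n, (8:ℝ)^(n+1) ≤ s n) (x : ℝ) (n : ℕ) :
    bc s n * x ^ (2 * bm s n) ≤ ‖bh s (x:ℂ)‖ := by
  have hxeven : ∀ k, (x:ℝ) ^ (2 * bm s k) = |x| ^ (2 * bm s k) := fun k =>
    ((even_two_mul _).pow_abs x).symm
  have hnn : ∀ k, 0 ≤ bc s k * x ^ (2 * bm s k) := by
    intro k
    rw [hxeven k]
    exact mul_nonneg (bc_pos hs k).le (pow_nonneg (abs_nonneg x) _)
  have hsum : Summable (fun k => bc s k * x ^ (2 * bm s k)) := by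
    apply Summable.of_nonneg_of_le hnn (fun k => ?_)
      (bgeom_summable.mul_right (expR (2 * |x|)))
    rw [hxeven k]
    calc bc s k * |x| ^ (2 * bm s k) ≤ (1/2:ℝ)^(k+1) * expR (4 * bδ k * |x|) :=
          bTb hs k _ (abs_nonneg x)
      _ ≤ (1/2:ℝ)^(k+1) * expR (2 * |x|) := by
          apply mul_le_mul_of_nonneg_left _ (by positivity)
          exact Real.exp_le_exp.2 (mul_le_mul_of_nonneg_right (bδ_le k) (abs_nonneg x))
  have hofReal : bh s (x:ℂ) = ((∑' k, bc s k * x ^ (2 * bm s k) : ℝ) : ℂ) := by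
    rw [bh, Complex.ofReal_tsum]
    congr 1; funext k; push_cast; ring
  rw [hofReal, Complex.norm_real, Real.norm_eq_abs, _root_.abs_of_nonneg (tsum_nonneg hnn)]
  exact hsum.le_tsum n (fun k _ => hnn k)

lemma bc_mul_pow {s : ℕ → ℝ} (hs : ∀ n, (8:ℝ)^(n+1) ≤ s n) (n : ℕ) :
    bc s n * s n ^ (2 * bm s n) = ((n:ℝ)+1) * expR (bδ n * s n) := by
  rw [bc, div_mul_cancel₀]
  exact pow_ne_zero _ (bs_pos hs n).ne'

lemma build {σ : ℝ} {f₁ : ℂ → ℂ} (hty : ExpTypeLe σ f₁)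
    (hwit : ∀ δ : ℝ, 0 < δ → ∀ B : ℝ, ∃ y : ℝ, B ≤ |y| ∧
      1 ≤ ‖f₁ y‖ * expR (δ * |y|)) :
    ∃ g : ℂ → ℂ, ExpTypeLe σ g ∧ (∀ z : ℂ, f₁ z = 0 → g z = 0) ∧ UnbddOnReal g := by
  obtain ⟨hdiff, hgrow⟩ := hty
  choose y hyB hyW using fun n : ℕ => hwit (bδ n) (bδ_pos n) ((8:ℝ)^(n+1))
  set s : ℕ → ℝ := fun n => |y n| with hsdef
  have hsn : ∀ n, s n = |y n| := fun n => rfl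
  have hs : ∀ n, (8:ℝ)^(n+1) ≤ s n := fun n => by rw [hsn]; exact hyB n
  refine ⟨fun z => f₁ z * bh s z, ⟨hdiff.mul (bh_diff hs), ?_⟩,
    fun z hz => by simp only [hz, zero_mul], ?_⟩
  · -- growth
    intro c hc
    set ε := (c - σ)/2 with hε
    have hε0 : 0 < ε := by rw [hε]; linarith
    obtain ⟨C₁, hC₁, hC₁b⟩ := hgrow (σ + ε) (by linarith)
    obtain ⟨D, hD, hDb⟩ := bh_growth hs hε0
    refine ⟨C₁ * D, by positivity, fun z => ?_⟩
    simp only [norm_mul]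
    calc ‖f₁ z‖ * ‖bh s z‖
        ≤ (C₁ * expR ((σ+ε) * ‖z‖)) * (D * expR (ε * ‖z‖)) :=
          mul_le_mul (hC₁b z) (hDb z) (norm_nonneg _) (by positivity)
      _ = C₁ * D * expR ((σ+ε)*‖z‖ + ε*‖z‖) := by
          rw [Real.exp_add]; ring
      _ = C₁ * D * expR (c * ‖z‖) := by
          congr 2; rw [hε]; ring
  · -- unbounded
    intro M
    obtain ⟨n, hn⟩ := exists_nat_gt M
    refine ⟨y n, ?_⟩
    have h1 : bc s n * (y n) ^ (2 * bm s n) ≤ ‖bh s (y n)‖ := bh_lower hs (y n) n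
    have h2 : (y n : ℝ) ^ (2 * bm s n) = s n ^ (2 * bm s n) := by
      rw [hsn]; exact ((even_two_mul _).pow_abs (y n)).symm
    have h3 : bc s n * s n ^ (2 * bm s n) = ((n:ℝ)+1) * expR (bδ n * s n) := bc_mul_pow hs n
    have hw : 1 ≤ ‖f₁ (y n)‖ * expR (bδ n * s n) := by
      rw [hsn]; exact hyW n
    have hkey : ((n:ℝ)+1) ≤ ‖f₁ (y n)‖ * ‖bh s (y n)‖ := by
      calc ((n:ℝ)+1) = ((n:ℝ)+1) * 1 := by ring
        _ ≤ ((n:ℝ)+1) * (‖f₁ (y n)‖ * expR (bδ n * s n)) :=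
            mul_le_mul_of_nonneg_left hw (by positivity)
        _ = ‖f₁ (y n)‖ * (((n:ℝ)+1) * expR (bδ n * s n)) := by ring
        _ = ‖f₁ (y n)‖ * (bc s n * (y n) ^ (2 * bm s n)) := by
            rw [← h3, ← h2]
        _ ≤ ‖f₁ (y n)‖ * ‖bh s (y n)‖ :=
            mul_le_mul_of_nonneg_left h1 (norm_nonneg _)
    show ‖f₁ (y n) * bh s (y n)‖ > M
    rw [norm_mul]
    have : M < (n:ℝ) + 1 := by
      calc M < (n:ℝ) := hn
        _ < (n:ℝ) + 1 := by linarith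
    linarith

lemma cosh_abs_le (w : ℂ) : ‖Complex.cosh w‖ ≤ expR |w.re| := by
  show ‖(Complex.exp w + Complex.exp (-w)) / 2‖ ≤ expR |w.re|
  rw [norm_div]
  have h2 : ‖(2:ℂ)‖ = 2 := by norm_num
  rw [h2]
  have h1 : ‖Complex.exp w + Complex.exp (-w)‖
      ≤ expR w.re + expR (-w.re) := by
    calc ‖Complex.exp w + Complex.exp (-w)‖
        ≤ ‖Complex.exp w‖ + ‖Complex.exp (-w)‖ := by
          apply norm_add_le
      _ = expR w.re + expR (-w.re) := by rw [Complex.norm_exp, Complex.norm_exp, Complex.neg_re]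
  have h3 : expR w.re + expR (-w.re) ≤ 2 * expR |w.re| := by
    rcases le_or_gt 0 w.re with h | h
    · have e1 : expR w.re ≤ expR |w.re| := Real.exp_le_exp.2 (le_abs_self _)
      have e2 : expR (-w.re) ≤ expR |w.re| := Real.exp_le_exp.2 (neg_le_abs _)
      linarith
    · have e1 : expR w.re ≤ expR |w.re| := Real.exp_le_exp.2 (le_abs_self _)
      have e2 : expR (-w.re) ≤ expR |w.re| := Real.exp_le_exp.2 (neg_le_abs _)
      linarith
  linarith [h1, h3]

lemma real_cosh_ge (t : ℝ) : expR |t| / 2 ≤ Real.cosh t := by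
  rw [Real.cosh_eq]
  rcases le_or_gt 0 t with h | h
  · rw [_root_.abs_of_nonneg h]
    have := (Real.exp_pos (-t)).le
    linarith
  · rw [_root_.abs_of_neg h]
    have := (Real.exp_pos t).le
    linarith


/-- Lemma 2: non-uniqueness for `B_σ` yields an unbounded function in `E_σ`
vanishing on `Λ`. -/
theorem stmt9 (σ : ℝ) (hσ : 0 < σ) (Λ : Set ℝ)
    (h : ∃ f, Bern σ f ∧ (∀ l ∈ Λ, f l = 0) ∧ ∃ z, f z ≠ 0) :
    ∃ g, ExpTypeLe σ g ∧ (∀ l ∈ Λ, g l = 0) ∧ UnbddOnReal g := by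
  obtain ⟨f, ⟨⟨hfd, hfty⟩, M0, hM0⟩, hΛ, z₀, hz₀⟩ := h
  have hM0nn : 0 ≤ M0 := le_trans (norm_nonneg _) (hM0 0)
  set E : Set ℝ := {δ : ℝ | 0 ≤ δ ∧ ∃ C, 0 < C ∧ ∀ x : ℝ,
    ‖f x‖ ≤ C * expR (-δ * |x|)} with hE
  have h0E : (0:ℝ) ∈ E := by
    refine ⟨le_refl 0, M0 + 1, by linarith, fun x => ?_⟩
    have : expR (-0 * |x|) = 1 := by norm_num
    rw [this, mul_one]
    linarith [hM0 x]
  have hEne : E.Nonempty := ⟨0, h0E⟩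
  have hBdd : BddAbove E := by
    by_contra hnb
    have hall : ∀ δ : ℝ, 0 < δ → ∃ C, 0 < C ∧ ∀ x : ℝ,
        ‖f x‖ ≤ C * expR (-δ * |x|) := by
      intro δ hδ
      obtain ⟨κ, hκE, hδκ⟩ := not_bddAbove_iff.1 hnb δ
      obtain ⟨hκ0, C, hC, hCb⟩ := hκE
      refine ⟨C, hC, fun x => le_trans (hCb x) ?_⟩
      apply mul_le_mul_of_nonneg_left _ hC.le
      apply Real.exp_le_exp.2
      nlinarith [abs_nonneg x]
    obtain ⟨M₁, hM₁, hM₁b⟩ := hfty (σ + 1) (by linarith)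
    exact hz₀ (eq_zero_of_all_decay hfd hM₁ (by linarith : (0:ℝ) < σ + 1) hM₁b hall z₀)
  set ε : ℝ := sSup E with hεdef
  have hε0 : 0 ≤ ε := le_csSup hBdd h0E
  set f₁ : ℂ → ℂ := fun z => f z * Complex.cosh ((ε:ℝ) * z) with hf₁
  have hf₁d : Differentiable ℂ f₁ :=
    hfd.mul (Complex.differentiable_cosh.comp ((differentiable_const _).mul differentiable_id))
  have hf₁ty : ExpTypeLe σ f₁ := by
    refine ⟨hf₁d, fun c hc => ?_⟩
    set δ : ℝ := (c - σ)/2 with hδdef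
    have hδ0 : 0 < δ := by rw [hδdef]; linarith
    obtain ⟨M₁, hM₁, hM₁b⟩ := hfty (σ + δ) (by linarith)
    obtain ⟨κ, hκE, hκgt⟩ := exists_lt_of_lt_csSup hEne (show ε - δ < ε by linarith)
    obtain ⟨hκ0, C, hC, hCb⟩ := hκE
    have hκle : κ ≤ ε := le_csSup hBdd (by exact ⟨hκ0, C, hC, hCb⟩)
    have hglob := PL_global hfd hC hM₁ (show (0:ℝ) < σ + δ by linarith) hκ0 hM₁b hCb
    refine ⟨max C M₁, lt_max_of_lt_right hM₁, fun z => ?_⟩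
    have hco : ‖Complex.cosh ((ε:ℝ) * z)‖ ≤ expR (ε * |z.re|) := by
      have := cosh_abs_le ((ε:ℝ) * z)
      have hre : (((ε:ℝ):ℂ) * z).re = ε * z.re := by
        simp [Complex.mul_re]
      rw [hre] at this
      rwa [abs_mul, _root_.abs_of_nonneg hε0] at this
    calc ‖f₁ z‖ = ‖f z‖ * ‖Complex.cosh ((ε:ℝ) * z)‖ := by
          rw [hf₁]; exact norm_mul _ _
      _ ≤ (max C M₁ * expR (-κ * |z.re| + (σ + δ) * |z.im|)) * expR (ε * |z.re|) :=
          mul_le_mul (hglob z) hco (norm_nonneg _) (by positivity)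
      _ = max C M₁ * expR ((-κ * |z.re| + (σ + δ) * |z.im|) + ε * |z.re|) := by
          rw [mul_assoc, ← Real.exp_add]
      _ ≤ max C M₁ * expR (c * ‖z‖) := by
          apply mul_le_mul_of_nonneg_left _ (le_trans hC.le (le_max_left _ _))
          apply Real.exp_le_exp.2
          have h1 : |z.re| ≤ ‖z‖ := Complex.abs_re_le_norm z
          have h2 : |z.im| ≤ ‖z‖ := Complex.abs_im_le_norm z
          have h3 : (ε - κ) * |z.re| ≤ δ * ‖z‖ := by
            apply le_trans (mul_le_mul_of_nonneg_right (show ε - κ ≤ δ by linarith) (abs_nonneg _))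
            exact mul_le_mul_of_nonneg_left h1 hδ0.le
          have h4 : (σ + δ) * |z.im| ≤ (σ + δ) * ‖z‖ :=
            mul_le_mul_of_nonneg_left h2 (by linarith)
          have hc' : c = σ + 2 * δ := by rw [hδdef]; ring
          have he : -κ * |z.re| + (σ + δ) * |z.im| + ε * |z.re|
              = (ε - κ) * |z.re| + (σ + δ) * |z.im| := by ring
          rw [he, hc']
          have hsum := add_le_add h3 h4
          linarith
  have hwit : ∀ δ : ℝ, 0 < δ → ∀ B : ℝ, ∃ x : ℝ, B ≤ |x| ∧
      1 ≤ ‖f₁ x‖ * expR (δ * |x|) := by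
    intro δ hδ B
    set B' : ℝ := max B 0 with hB'
    have hB'0 : 0 ≤ B' := le_max_right _ _
    have hnotE : (ε + δ/2) ∉ E := by
      intro hmem
      have := le_csSup hBdd hmem
      linarith
    rw [hE] at hnotE
    simp only [Set.mem_setOf_eq, not_and, not_exists] at hnotE
    have hnot := hnotE (by linarith)
    set Cc : ℝ := (M0 + 1) * expR ((ε + δ/2) * B') + 2 with hCc
    have hCc0 : 0 < Cc := by
      have h := mul_pos (show (0:ℝ) < M0 + 1 by linarith) (Real.exp_pos ((ε + δ/2) * B'))
      rw [hCc]
      linarith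
    have hnC := hnot Cc
    push_neg at hnC
    obtain ⟨x, hx⟩ := hnC hCc0
    -- hx : Cc * expR (-(ε + δ/2) * |x|) < abs (f x)  (as ¬ ≤)
    have hxgt : Cc * expR (-(ε + δ/2) * |x|) < ‖f x‖ := hx
    have hxB : B' ≤ |x| := by
      by_contra hlt
      push_neg at hlt
      have h1 : (M0 + 1) ≤ Cc * expR (-(ε + δ/2) * |x|) := by
        have he : Cc * expR (-(ε + δ/2) * |x|)
            = (M0 + 1) * expR ((ε + δ/2) * (B' - |x|)) + 2 * expR (-(ε + δ/2) * |x|) := by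
          rw [hCc]
          rw [add_mul, mul_assoc, ← Real.exp_add]
          ring_nf
        rw [he]
        have h2 : (1:ℝ) ≤ expR ((ε + δ/2) * (B' - |x|)) := by
          apply Real.one_le_exp
          apply mul_nonneg (by linarith)
          linarith
        nlinarith [Real.exp_pos (-(ε + δ/2) * |x|), hM0nn]
      have h3 : ‖f x‖ ≤ M0 := hM0 x
      linarith
    refine ⟨x, le_trans (le_max_left _ _) hxB, ?_⟩
    have hcosh : expR (ε * |x|) / 2 ≤ ‖Complex.cosh ((ε:ℝ) * (x:ℂ))‖ := by
      have hcast : ((ε:ℝ):ℂ) * ((x:ℝ):ℂ) = ((ε * x : ℝ):ℂ) := by push_cast; ring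
      rw [hcast, ← Complex.ofReal_cosh, Complex.norm_real, Real.norm_eq_abs,
        _root_.abs_of_nonneg (Real.cosh_pos _).le]
      have := real_cosh_ge (ε * x)
      rwa [abs_mul, _root_.abs_of_nonneg hε0] at this
    have hmain : 2 < ‖f x‖ * expR ((ε + δ) * |x|) := by
      have h5 : Cc * expR (-(ε + δ/2) * |x|) * expR ((ε + δ) * |x|)
          < ‖f x‖ * expR ((ε + δ) * |x|) :=
        mul_lt_mul_of_pos_right hxgt (Real.exp_pos _)
      have h6 : Cc * expR (-(ε + δ/2) * |x|) * expR ((ε + δ) * |x|)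
          = Cc * expR ((δ/2) * |x|) := by
        rw [mul_assoc, ← Real.exp_add]
        ring_nf
      have h7 : Cc ≤ Cc * expR ((δ/2) * |x|) := by
        nth_rewrite 1 [← mul_one Cc]
        apply mul_le_mul_of_nonneg_left _ hCc0.le
        apply Real.one_le_exp
        positivity
      have h8 : (2:ℝ) ≤ Cc := by
        have h := mul_pos (show (0:ℝ) < M0 + 1 by linarith) (Real.exp_pos ((ε + δ/2) * B'))
        rw [hCc]
        linarith
      rw [h6] at h5
      exact lt_of_le_of_lt (h8.trans h7) h5
    calc (1:ℝ) = 2 * (1/2) := by norm_num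
      _ ≤ (‖f x‖ * expR ((ε + δ) * |x|)) * (1/2) := by
          apply mul_le_mul_of_nonneg_right (le_of_lt hmain) (by norm_num)
      _ = ‖f x‖ * (expR (ε * |x|) / 2) * expR (δ * |x|) := by
          rw [show (ε + δ) * |x| = ε * |x| + δ * |x| by ring, Real.exp_add]; ring
      _ ≤ ‖f x‖ * ‖Complex.cosh ((ε:ℝ) * (x:ℂ))‖ * expR (δ * |x|) := by
          apply mul_le_mul_of_nonneg_right _ (Real.exp_pos _).le
          exact mul_le_mul_of_nonneg_left hcosh (norm_nonneg _)
      _ = ‖f₁ x‖ * expR (δ * |x|) := by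
          rw [hf₁]
          rw [← norm_mul]
  obtain ⟨g, hgty, hgvan, hgunb⟩ := build hf₁ty hwit
  refine ⟨g, hgty, fun l hl => hgvan l ?_, hgunb⟩
  rw [hf₁]
  simp only [hΛ l hl, zero_mul]

end Stmt9Proof
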